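/- Regard 𝓔 as a function of θ with d_ij and d_jk held fixed, and suppose θ* ∈ (0, π) satisfies the equilibrium condition H² = I_H(θ*)²/d_ki(θ*)³. Then d²𝓔/dθ²(θ*) = m_k m_i (4 m_i m_k d_ki(θ*)² − 3 I_H(θ*)) (d_ij d_jk sin θ*)²/(I_H(θ*) d_ki(θ*)⁵). In particular, the equilibrium is energetically stable in θ if and only if 4 m_i m_k d_ki(θ*)² − 3 I_H(θ*) > 0. -/

import Mathlib

/-- Third side from the law of cosines. -/
noncomputable def dki (dij djk θ : ℝ) : ℝ :=
  Real.sqrt (dij ^ 2 + djk ^ 2 - 2 * dij * djk * Real.cos θ)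

/-- Moment of inertia about the rotation axis. -/
noncomputable def IH (mi mj mk IS dij djk θ : ℝ) : ℝ :=
  mi * mj * dij ^ 2 + mj * mk * djk ^ 2 + mk * mi * (dki dij djk θ) ^ 2 + IS

/-- The amended potential `𝓔 = H²/(2 I_H) + U` as a function of
`(d_ij, d_jk, θ)`. -/
noncomputable def amended (mi mj mk IS H dij djk θ : ℝ) : ℝ :=
  H ^ 2 / (2 * IH mi mj mk IS dij djk θ)
    - (mi * mj / dij + mj * mk / djk + mk * mi / dki dij djk θ)

/-!
With `q = d_ki² = d_ij² + d_jk² − 2 d_ij d_jk cos θ` the amended potential is `𝓔 = φ(q(θ))`,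
where `φ(q) = H²/(2(A + Bq)) − C − B/√q` with `B = m_k m_i` and `I_H = A + Bq`.
The equilibrium condition `H² = I_H²/d_ki³` says exactly that `φ'(q(θ*)) = 0`, hence
`𝓔''(θ*) = φ''(q(θ*)) q'(θ*)²`, and `φ''` at such a point is
`B (4 B q − 3 I_H) / (4 I_H d_ki⁵)`, while `q' = 2 d_ij d_jk sin θ`.
-/

open Filter Topology Real

theorem hasDerivAt_deriv_comp_of_eventually {φ φ' Q Q' : ℝ → ℝ} {x φ'' Q'' : ℝ}
    (hφ : ∀ᶠ q in 𝓝 (Q x), HasDerivAt φ (φ' q) q) (hφ' : HasDerivAt φ' φ'' (Q x))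
    (hQ : ∀ᶠ t in 𝓝 x, HasDerivAt Q (Q' t) t) (hQ' : HasDerivAt Q' Q'' x) :
    HasDerivAt (deriv fun t => φ (Q t)) (φ'' * Q' x ^ 2 + φ' (Q x) * Q'') x := by
  have hφQ : ∀ᶠ t in 𝓝 x, HasDerivAt φ (φ' (Q t)) (Q t) :=
    hQ.self_of_nhds.continuousAt.tendsto.eventually hφ
  have hderiv : deriv (fun t => φ (Q t)) =ᶠ[𝓝 x] fun t => φ' (Q t) * Q' t := by
    filter_upwards [hQ, hφQ] with t hQt hφt
    exact (hφt.comp t hQt).deriv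
  refine (((hφ'.comp x hQ.self_of_nhds).mul hQ').congr_of_eventuallyEq hderiv).congr_deriv ?_
  rw [Function.comp_apply]
  ring

noncomputable def cosineLawSq (a b t : ℝ) : ℝ := a ^ 2 + b ^ 2 - 2 * a * b * cos t

theorem cosineLawSq_eq (a b t : ℝ) : cosineLawSq a b t = (b - a * cos t) ^ 2 + (a * sin t) ^ 2 := by
  rw [cosineLawSq]
  linear_combination a ^ 2 * (sin_sq_add_cos_sq t).symm

theorem cosineLawSq_nonneg (a b t : ℝ) : 0 ≤ cosineLawSq a b t := by
  rw [cosineLawSq_eq]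
  positivity

theorem cosineLawSq_pos {a b t : ℝ} (ha : a ≠ 0) (ht : sin t ≠ 0) : 0 < cosineLawSq a b t := by
  rw [cosineLawSq_eq]
  exact add_pos_of_nonneg_of_pos (sq_nonneg _) (by positivity)

theorem hasDerivAt_cosineLawSq (a b t : ℝ) :
    HasDerivAt (cosineLawSq a b) (2 * a * b * sin t) t :=
  (((hasDerivAt_cos t).const_mul (2 * a * b)).const_sub (a ^ 2 + b ^ 2)).congr_deriv (by ring)

theorem dki_eq_sqrt (a b t : ℝ) : dki a b t = √(cosineLawSq a b t) := rfl

theorem dki_sq (a b t : ℝ) : dki a b t ^ 2 = cosineLawSq a b t :=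
  sq_sqrt (cosineLawSq_nonneg a b t)

/-- The amended potential in terms of `q = d_ki²`: `I_H = A + B q` and `U = −C − B/√q`. -/
noncomputable def reducedAmended (H A B C q : ℝ) : ℝ := H ^ 2 / (2 * (A + B * q)) - (C + B / √q)

noncomputable def reducedAmendedDeriv (H A B q : ℝ) : ℝ :=
  -(H ^ 2 * B) / (2 * (A + B * q) ^ 2) + B / (2 * q * √q)

theorem amended_eq_reducedAmended (mi mj mk IS H dij djk t : ℝ) :
    amended mi mj mk IS H dij djk t =
      reducedAmended H (mi * mj * dij ^ 2 + mj * mk * djk ^ 2 + IS) (mk * mi)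
        (mi * mj / dij + mj * mk / djk) (cosineLawSq dij djk t) := by
  rw [amended, IH, dki_sq, reducedAmended, ← dki_eq_sqrt]
  ring

theorem IH_eq (mi mj mk IS dij djk t : ℝ) :
    IH mi mj mk IS dij djk t =
      mi * mj * dij ^ 2 + mj * mk * djk ^ 2 + IS + mk * mi * cosineLawSq dij djk t := by
  rw [IH, dki_sq]
  ring

section reduced

variable {H A B q : ℝ}

theorem hasDerivAt_reducedAmended (C : ℝ) (hq : 0 < q) (hI : A + B * q ≠ 0) :
    HasDerivAt (reducedAmended H A B C) (reducedAmendedDeriv H A B q) q := by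
  have hr : 0 < √q := sqrt_pos.mpr hq
  have hI2 : 2 * (A + B * q) ≠ 0 := by positivity
  refine (((hasDerivAt_const q (H ^ 2)).div
      ((((hasDerivAt_id' q).const_mul B).const_add A).const_mul 2) hI2).sub
    (((hasDerivAt_const q B).div (hasDerivAt_sqrt hq.ne') hr.ne').const_add C)).congr_deriv ?_
  obtain ⟨s, hs, rfl⟩ : ∃ s, 0 < s ∧ s ^ 2 = q := ⟨√q, hr, sq_sqrt hq.le⟩
  rw [reducedAmendedDeriv, sqrt_sq hs.le]
  field_simp
  ring

theorem hasDerivAt_reducedAmendedDeriv (hq : 0 < q) (hI : A + B * q ≠ 0) :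
    HasDerivAt (reducedAmendedDeriv H A B)
      (H ^ 2 * B ^ 2 / (A + B * q) ^ 3 - 3 * B / (4 * q ^ 2 * √q)) q := by
  have hr : 0 < √q := sqrt_pos.mpr hq
  refine ((hasDerivAt_const q (H ^ 2 * B)).neg.div
      (((((hasDerivAt_id' q).const_mul B).const_add A).pow 2).const_mul 2) (by simp [hI])).add
    ((hasDerivAt_const q B).div (((hasDerivAt_id' q).const_mul 2).mul (hasDerivAt_sqrt hq.ne'))
      (by simp only [Pi.mul_apply]; positivity)) |>.congr_deriv ?_
  obtain ⟨s, hs, rfl⟩ : ∃ s, 0 < s ∧ s ^ 2 = q := ⟨√q, hr, sq_sqrt hq.le⟩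
  simp only [Pi.neg_apply, Pi.pow_apply, Pi.mul_apply, sqrt_sq hs.le]
  field_simp
  ring

variable (hq : 0 < q) (hI : A + B * q ≠ 0) (hequil : H ^ 2 = (A + B * q) ^ 2 / √q ^ 3)
include hq hI hequil

theorem reducedAmendedDeriv_eq_zero_of_equilibrium : reducedAmendedDeriv H A B q = 0 := by
  obtain ⟨s, hs, rfl⟩ : ∃ s, 0 < s ∧ s ^ 2 = q := ⟨√q, sqrt_pos.mpr hq, sq_sqrt hq.le⟩
  rw [reducedAmendedDeriv, hequil, sqrt_sq hs.le]
  field_simp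
  ring

theorem second_deriv_reducedAmended_of_equilibrium :
    H ^ 2 * B ^ 2 / (A + B * q) ^ 3 - 3 * B / (4 * q ^ 2 * √q) =
      B * (4 * B * q - 3 * (A + B * q)) / (4 * (A + B * q) * √q ^ 5) := by
  obtain ⟨s, hs, rfl⟩ : ∃ s, 0 < s ∧ s ^ 2 = q := ⟨√q, sqrt_pos.mpr hq, sq_sqrt hq.le⟩
  rw [hequil, sqrt_sq hs.le]
  field_simp

end reduced

theorem deriv_deriv_amended_of_equilibrium {mi mj mk IS H dij djk θs : ℝ}
    (hmi : 0 < mi) (hmj : 0 < mj) (hmk : 0 < mk) (hIS : 0 < IS) (hdij : 0 < dij)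
    (hθs : θs ∈ Set.Ioo 0 π)
    (hequil : H ^ 2 = (IH mi mj mk IS dij djk θs) ^ 2 / (dki dij djk θs) ^ 3) :
    deriv (deriv (fun t => amended mi mj mk IS H dij djk t)) θs =
      mk * mi * (4 * mi * mk * (dki dij djk θs) ^ 2 - 3 * IH mi mj mk IS dij djk θs) *
        (dij * djk * sin θs) ^ 2 / (IH mi mj mk IS dij djk θs * (dki dij djk θs) ^ 5) := by
  have hq : 0 < cosineLawSq dij djk θs :=
    cosineLawSq_pos hdij.ne' (sin_pos_of_pos_of_lt_pi hθs.1 hθs.2).ne'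
  have hI : 0 < mi * mj * dij ^ 2 + mj * mk * djk ^ 2 + IS + mk * mi * cosineLawSq dij djk θs := by
    positivity
  rw [IH_eq, dki_eq_sqrt] at hequil
  have hd2 := hasDerivAt_deriv_comp_of_eventually
    (φ' := reducedAmendedDeriv H (mi * mj * dij ^ 2 + mj * mk * djk ^ 2 + IS) (mk * mi))
    ((eventually_gt_nhds hq).mono fun q hq' =>
      hasDerivAt_reducedAmended (mi * mj / dij + mj * mk / djk) hq' (by positivity))
    (hasDerivAt_reducedAmendedDeriv hq hI.ne')
    (Eventually.of_forall (hasDerivAt_cosineLawSq dij djk)) ((hasDerivAt_sin θs).const_mul _)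
  simp only [amended_eq_reducedAmended]
  rw [hd2.deriv, reducedAmendedDeriv_eq_zero_of_equilibrium hq hI.ne' hequil,
    second_deriv_reducedAmended_of_equilibrium hq hI.ne' hequil, IH_eq, dki_sq, dki_eq_sqrt]
  field_simp
  ring

theorem transitional_resting_second_variation_general
    (mi mj mk IS H dij djk θs : ℝ)
    (hmi : 0 < mi) (hmj : 0 < mj) (hmk : 0 < mk) (hIS : 0 < IS)
    (hdij : 0 < dij) (hdjk : 0 < djk) (hθs : θs ∈ Set.Ioo 0 Real.pi)
    (hequil : H ^ 2 = (IH mi mj mk IS dij djk θs) ^ 2 / (dki dij djk θs) ^ 3) :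
    deriv (deriv (fun t => amended mi mj mk IS H dij djk t)) θs =
        mk * mi * (4 * mi * mk * (dki dij djk θs) ^ 2 - 3 * IH mi mj mk IS dij djk θs) *
          (dij * djk * Real.sin θs) ^ 2 /
          (IH mi mj mk IS dij djk θs * (dki dij djk θs) ^ 5) ∧
      (0 < deriv (deriv (fun t => amended mi mj mk IS H dij djk t)) θs ↔
        0 < 4 * mi * mk * (dki dij djk θs) ^ 2 - 3 * IH mi mj mk IS dij djk θs) := by
  have hderiv := deriv_deriv_amended_of_equilibrium hmi hmj hmk hIS hdij hθs hequil
  have hsin : 0 < sin θs := sin_pos_of_pos_of_lt_pi hθs.1 hθs.2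
  have hq : 0 < cosineLawSq dij djk θs := cosineLawSq_pos hdij.ne' hsin.ne'
  have hdki : 0 < dki dij djk θs := sqrt_pos.mpr hq
  have hIH : 0 < IH mi mj mk IS dij djk θs := by rw [IH_eq]; positivity
  refine ⟨hderiv, ?_⟩
  rw [hderiv, mul_div_assoc, mul_right_comm]
  exact mul_pos_iff_of_pos_left (by positivity)

/-- Second variation in `θ` at a Transitional Resting equilibrium
(`H² = I_H(θ*)²/d_ki(θ*)³`):
`d²𝓔/dθ²(θ*) = m_k m_i (4 m_i m_k d_ki² − 3 I_H)(d_ij d_jk sin θ*)²/(I_H d_ki⁵)`,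
which is strictly positive (energetic stability in `θ`) iff
`4 m_i m_k d_ki(θ*)² − 3 I_H(θ*) > 0`. -/
theorem transitional_resting_second_variation
    (mi mj mk IS H dij djk θs : ℝ)
    (hmi : 0 < mi) (hmj : 0 < mj) (hmk : 0 < mk) (hIS : 0 < IS) (hH : 0 ≤ H)
    (hdij : 0 < dij) (hdjk : 0 < djk) (hθs : θs ∈ Set.Ioo 0 Real.pi)
    (hequil : H ^ 2 = (IH mi mj mk IS dij djk θs) ^ 2 / (dki dij djk θs) ^ 3) :
    deriv (deriv (fun t => amended mi mj mk IS H dij djk t)) θs =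
        mk * mi * (4 * mi * mk * (dki dij djk θs) ^ 2 - 3 * IH mi mj mk IS dij djk θs) *
          (dij * djk * Real.sin θs) ^ 2 /
          (IH mi mj mk IS dij djk θs * (dki dij djk θs) ^ 5) ∧
      (0 < deriv (deriv (fun t => amended mi mj mk IS H dij djk t)) θs ↔
        0 < 4 * mi * mk * (dki dij djk θs) ^ 2 - 3 * IH mi mj mk IS dij djk θs) :=
  transitional_resting_second_variation_general mi mj mk IS H dij djk θs hmi hmj hmk hIS hdij hdjk
    hθs hequil
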